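/- Let Z be a random variable on a discrete probability space with finite range 𝒵, let ρ be a random state on a finite-dimensional complex Hilbert space defined on the same probability space, and let F be a two-universal random function on 𝒵 with finite range 𝒮, chosen independently of the pair (Z, ρ). Then E_F[ D(F(Z) | ρ) ] ≤ 2^{−S₂([{Z} ⊗ ρ])}, i.e., E_F[ D(F(Z) | ρ) ] ≤ tr([{Z} ⊗ ρ]²). -/

import Mathlib

open Matrix
open scoped Kronecker ComplexOrder

noncomputable section

/-- A density operator: positive semidefinite with trace one. -/
def IsDensityOp {d : Type*} [Fintype d] [DecidableEq d] (ρ : Matrix d d ℂ) : Prop :=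
  ρ.PosSemidef ∧ ρ.trace = 1

/-- The operator absolute value `|A| = (A Aᴴ)^(1/2)`. -/
noncomputable def matAbs {d : Type*} [Fintype d] [DecidableEq d] (A : Matrix d d ℂ) :
    Matrix d d ℂ :=
  (Matrix.posSemidef_self_mul_conjTranspose A).1.eigenvectorUnitary.1 *
    diagonal ((↑) ∘ (√·) ∘ (Matrix.posSemidef_self_mul_conjTranspose A).1.eigenvalues) *
    (star (Matrix.posSemidef_self_mul_conjTranspose A).1.eigenvectorUnitary : Matrix d d ℂ)

/-- Trace distance `δ(ρ,σ) = (1/2) tr|ρ-σ|`. -/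
noncomputable def traceDist {d : Type*} [Fintype d] [DecidableEq d]
    (ρ σ : Matrix d d ℂ) : ℝ :=
  (1 / 2) * (matAbs (ρ - σ)).trace.re

/-- Squared Hilbert-Schmidt distance `Δ(ρ,σ) = tr((ρ-σ)²)`. -/
noncomputable def hsDistSq {d : Type*} [Fintype d] [DecidableEq d]
    (ρ σ : Matrix d d ℂ) : ℝ :=
  ((ρ - σ) * (ρ - σ)).trace.re

/-- Expectation of a random state. -/
noncomputable def expState {Ω d : Type*} [Fintype d]
    (P : Ω → ℝ) (ρ : Ω → Matrix d d ℂ) : Matrix d d ℂ :=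
  ∑' ω, P ω • ρ ω

/-- Probability of an event. -/
noncomputable def prEvent {Ω : Type*} (P : Ω → ℝ) (E : Set Ω) : ℝ :=
  ∑' ω, E.indicator P ω

/-- Conditional expectation `[ρ | E]` of a random state given an event. -/
noncomputable def condExpState {Ω d : Type*} [Fintype d]
    (P : Ω → ℝ) (ρ : Ω → Matrix d d ℂ) (E : Set Ω) : Matrix d d ℂ :=
  (prEvent P E)⁻¹ • ∑' ω, E.indicator (fun ω => P ω • ρ ω) ω

/-- The classical state `|x⟩⟨x|`. -/
noncomputable def classicalState {𝒳 : Type*} [Fintype 𝒳] [DecidableEq 𝒳] (x : 𝒳) :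
    Matrix 𝒳 𝒳 ℂ :=
  Matrix.single x x 1

/-- The fully mixed state on `𝒳`. -/
noncomputable def uniformState (𝒳 : Type*) [Fintype 𝒳] [DecidableEq 𝒳] : Matrix 𝒳 𝒳 ℂ :=
  (Fintype.card 𝒳 : ℂ)⁻¹ • (1 : Matrix 𝒳 𝒳 ℂ)

/-- Non-uniformity `d(X|ρ) = δ([{X} ⊗ ρ], [{U}] ⊗ [ρ])`. -/
noncomputable def nonUnif {Ω 𝒳 d : Type*} [Fintype 𝒳] [DecidableEq 𝒳]
    [Fintype d] [DecidableEq d]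
    (P : Ω → ℝ) (X : Ω → 𝒳) (ρ : Ω → Matrix d d ℂ) : ℝ :=
  traceDist (expState P (fun ω => classicalState (X ω) ⊗ₖ ρ ω))
    (uniformState 𝒳 ⊗ₖ expState P ρ)

/-- `D(X|ρ) = Δ([{X} ⊗ ρ], [{U}] ⊗ [ρ])`. -/
noncomputable def DNonUnif {Ω 𝒳 d : Type*} [Fintype 𝒳] [DecidableEq 𝒳]
    [Fintype d] [DecidableEq d]
    (P : Ω → ℝ) (X : Ω → 𝒳) (ρ : Ω → Matrix d d ℂ) : ℝ :=
  hsDistSq (expState P (fun ω => classicalState (X ω) ⊗ₖ ρ ω))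
    (uniformState 𝒳 ⊗ₖ expState P ρ)

/-- Rényi entropy of order 0: `log₂ rank ρ`. -/
noncomputable def renyiS0 {d : Type*} [Fintype d] [DecidableEq d] (ρ : Matrix d d ℂ) : ℝ :=
  Real.logb 2 (ρ.rank)

/-- Rényi entropy of order 2: `-log₂ tr(ρ²)`. -/
noncomputable def renyiS2 {d : Type*} [Fintype d] [DecidableEq d] (ρ : Matrix d d ℂ) : ℝ :=
  -Real.logb 2 ((ρ * ρ).trace.re)

/-- Maximal eigenvalue of a Hermitian matrix. -/
noncomputable def lambdaMax {d : Type*} [Fintype d] [DecidableEq d] (ρ : Matrix d d ℂ) : ℝ :=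
  if h : ρ.IsHermitian then ⨆ i, h.eigenvalues i else 0

/-- Von Neumann entropy `S(ρ) = -tr(ρ log₂ ρ)` (in bits). -/
noncomputable def vnEntropy {d : Type*} [Fintype d] [DecidableEq d] (ρ : Matrix d d ℂ) : ℝ :=
  if h : ρ.IsHermitian then -∑ i, h.eigenvalues i * Real.logb 2 (h.eigenvalues i) else 0

/-- Smooth Rényi entropy of order 0. -/
noncomputable def smoothS0 {d : Type*} [Fintype d] [DecidableEq d]
    (ε : ℝ) (ρ : Matrix d d ℂ) : ℝ :=
  sInf {x : ℝ | ∃ σ : Matrix d d ℂ,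
    IsDensityOp σ ∧ traceDist ρ σ ≤ ε ∧ x = Real.logb 2 (σ.rank)}

/-- Smooth Rényi entropy of order ∞. -/
noncomputable def smoothSinf {d : Type*} [Fintype d] [DecidableEq d]
    (ε : ℝ) (ρ : Matrix d d ℂ) : ℝ :=
  sSup {x : ℝ | ∃ σ : Matrix d d ℂ,
    IsDensityOp σ ∧ traceDist ρ σ ≤ ε ∧ x = -Real.logb 2 (lambdaMax σ)}

/-!
Write `[{Z} ⊗ ρ] = ∑ z, {z} ⊗ σ_z` with `σ_z = P_Z(z) ρ_z`. For a fixed function `f`,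
`[{f(Z)} ⊗ ρ] - [{U}] ⊗ [ρ] = ∑ z, ({f z} - 𝟙/|𝒮|) ⊗ σ_z`, hence
`D(f(Z)|ρ) = ∑ z z', (δ_{f z, f z'} - 1/|𝒮|) tr(σ_z σ_z')`.
Averaging over `F` replaces `δ_{F z, F z'}` by the collision probability, which is at most `1/|𝒮|`
for `z ≠ z'`. As `tr(σ_z σ_z') ≥ 0` for positive `σ_z`, only the diagonal terms survive, and they
sum to at most `∑ z, tr(σ_z²) = tr([{Z} ⊗ ρ]²)`.
-/

open Finset

section MatrixFacts

variable {n : Type*}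

theorem Matrix.PosSemidef.norm_apply_sq_le {A : Matrix n n ℂ} (hA : A.PosSemidef) (i j : n) :
    ‖A i j‖ ^ 2 ≤ (A i i).re * (A j j).re := by
  have hdet := (hA.submatrix ![i, j]).det_nonneg
  rw [det_fin_two] at hdet
  simp only [submatrix_apply, Matrix.cons_val_zero, Matrix.cons_val_one] at hdet
  have hji : A j i = (starRingEnd ℂ) (A i j) := (hA.1.apply j i).symm
  rw [hji, Complex.mul_conj', ← (hA.1.coe_re_apply_self i), ← (hA.1.coe_re_apply_self j),
    Complex.le_def] at hdet
  simpa [sq] using hdet.1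

variable [Fintype n]

theorem Matrix.PosSemidef.tsum {ι : Type*} {f : ι → Matrix n n ℂ}
    (hf : ∀ i, (f i).PosSemidef) : (∑' i, f i).PosSemidef := by
  by_cases hs : Summable f
  · refine posSemidef_iff_dotProduct_mulVec.mpr ⟨?_, fun x => ?_⟩
    · rw [IsHermitian, conjTranspose_tsum]
      exact tsum_congr fun i => (hf i).1.eq
    · let q : Matrix n n ℂ →ₗ[ℂ] ℂ :=
        { toFun := fun A => star x ⬝ᵥ (A *ᵥ x)
          map_add' := fun A B => by simp [add_mulVec, dotProduct_add]
          map_smul' := fun c A => by simp [smul_mulVec, dotProduct_smul] }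
      have hq : star x ⬝ᵥ ((∑' i, f i) *ᵥ x) = ∑' i, star x ⬝ᵥ (f i *ᵥ x) :=
        (LinearMap.toContinuousLinearMap q).map_tsum hs
      rw [hq]
      exact tsum_nonneg fun i => (posSemidef_iff_dotProduct_mulVec.mp (hf i)).2 x
  · rw [tsum_eq_zero_of_not_summable hs]
    exact .zero

variable [DecidableEq n]

open scoped MatrixOrder in
theorem Matrix.PosSemidef.trace_mul_nonneg {A B : Matrix n n ℂ} (hA : A.PosSemidef)
    (hB : B.PosSemidef) : 0 ≤ (A * B).trace := by
  obtain ⟨S, rfl⟩ := CStarAlgebra.nonneg_iff_eq_star_mul_self.mp hA.nonneg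
  rw [mul_assoc, trace_mul_comm]
  exact (hB.mul_mul_conjTranspose_same S).trace_nonneg

theorem IsDensityOp.norm_apply_le {ρ : Matrix n n ℂ} (hρ : IsDensityOp ρ) (i j : n) :
    ‖ρ i j‖ ≤ 1 := by
  have hdiag : ∀ k, 0 ≤ (ρ k k).re ∧ (ρ k k).re ≤ 1 := by
    have hre : ∀ k, 0 ≤ (ρ k k).re := fun k => (Complex.le_def.mp (hρ.1.diag_nonneg (i := k))).1
    have htr : ∑ k, (ρ k k).re = 1 := by
      rw [← Complex.re_sum]; exact congrArg Complex.re hρ.2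
    exact fun k => ⟨hre k, htr ▸ single_le_sum (fun k _ => hre k) (mem_univ k)⟩
  have hsq : ‖ρ i j‖ ^ 2 ≤ 1 := (hρ.1.norm_apply_sq_le i j).trans <|
    mul_le_one₀ (hdiag i).2 (hdiag j).1 (hdiag j).2
  nlinarith [norm_nonneg (ρ i j)]

theorem IsDensityOp.trace_mul_self_pos {ρ : Matrix n n ℂ} (hρ : IsDensityOp ρ) :
    0 < (ρ * ρ).trace.re := by
  have hne : ρ ≠ 0 := fun h => by simpa [h] using hρ.2
  have hpos : 0 < (ρ * ρᴴ).trace :=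
    (posSemidef_self_mul_conjTranspose ρ).trace_nonneg.lt_of_ne
      (fun h => hne (trace_mul_conjTranspose_self_eq_zero_iff.mp h.symm))
  rw [hρ.1.1.eq] at hpos
  exact (Complex.lt_def.mp hpos).1

end MatrixFacts

theorem summable_of_tsum_eq_one {ι : Type*} {f : ι → ℝ} (h : ∑' i, f i = 1) : Summable f := by
  by_contra hs
  simp [tsum_eq_zero_of_not_summable hs] at h

section Expectation

variable {Ω n : Type*} [Fintype n] [DecidableEq n] {P : Ω → ℝ}

theorem summable_smul_of_isDensityOp (hPs : Summable P) (hP : ∀ ω, 0 ≤ P ω)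
    {ρ : Ω → Matrix n n ℂ} (hρ : ∀ ω, IsDensityOp (ρ ω)) : Summable fun ω => P ω • ρ ω := by
  refine Pi.summable.mpr fun i => Pi.summable.mpr fun j => hPs.of_norm_bounded fun ω => ?_
  rw [Matrix.smul_apply, norm_smul, Real.norm_of_nonneg (hP ω)]
  exact mul_le_of_le_one_right (hP ω) ((hρ ω).norm_apply_le i j)

theorem IsDensityOp.expState (hP : ∀ ω, 0 ≤ P ω) (hP1 : ∑' ω, P ω = 1)
    {ρ : Ω → Matrix n n ℂ} (hρ : ∀ ω, IsDensityOp (ρ ω)) : IsDensityOp (expState P ρ) := by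
  have hPs := summable_of_tsum_eq_one hP1
  refine ⟨PosSemidef.tsum fun ω => ?_, ?_⟩
  · rw [← Complex.coe_smul]
    exact (hρ ω).1.smul (Complex.zero_le_real.mpr (hP ω))
  · have htr := (LinearMap.toContinuousLinearMap (traceLinearMap n ℂ ℂ)).map_tsum
      (summable_smul_of_isDensityOp hPs hP hρ)
    simp only [LinearMap.coe_toContinuousLinearMap', traceLinearMap_apply, trace_smul,
      (hρ _).2] at htr
    rw [_root_.expState, htr]
    simp only [Complex.real_smul, mul_one]
    exact_mod_cast hP1

end Expectation

theorem HasSum.kronecker_left {ι l m n p R : Type*} [NonUnitalNonAssocSemiring R]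
    [TopologicalSpace R] [IsTopologicalSemiring R] {f : ι → Matrix n p R} {S : Matrix n p R}
    (hf : HasSum f S) (A : Matrix l m R) : HasSum (fun i => A ⊗ₖ f i) (A ⊗ₖ S) :=
  Pi.hasSum.mpr fun ⟨a, b⟩ => Pi.hasSum.mpr fun ⟨c, e⟩ =>
    (Pi.hasSum.mp (Pi.hasSum.mp hf b) e).mul_left (A a c)

theorem Matrix.kronecker_finsetSum {ι l m n p R : Type*} [CommSemiring R] (A : Matrix l m R)
    (s : Finset ι) (B : ι → Matrix n p R) : A ⊗ₖ ∑ i ∈ s, B i = ∑ i ∈ s, A ⊗ₖ B i :=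
  map_sum (kroneckerBilinear (R := R) A) B s

theorem Matrix.sub_kronecker {l m n p R : Type*} [Ring R] (A₁ A₂ : Matrix l m R)
    (B : Matrix n p R) : (A₁ - A₂) ⊗ₖ B = A₁ ⊗ₖ B - A₂ ⊗ₖ B := by
  ext ⟨a, b⟩ ⟨c, e⟩
  simp [sub_mul]

theorem Matrix.trace_mul_self_sum_kronecker {ι m n R : Type*} [Fintype m] [Fintype n]
    [CommSemiring R] (s : Finset ι) (M : ι → Matrix m m R) (N : ι → Matrix n n R) :
    ((∑ i ∈ s, M i ⊗ₖ N i) * ∑ i ∈ s, M i ⊗ₖ N i).trace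
      = ∑ i ∈ s, ∑ j ∈ s, (M i * M j).trace * (N i * N j).trace := by
  simp only [sum_mul, mul_sum, trace_sum, ← mul_kronecker_mul, trace_kronecker]
  exact sum_comm

section ClassicalQuantum

variable {𝒳 : Type*} [Fintype 𝒳] [DecidableEq 𝒳]

theorem IsDensityOp.classicalState_kronecker {n : Type*} [Fintype n] [DecidableEq n] (x : 𝒳)
    {ρ : Matrix n n ℂ} (hρ : IsDensityOp ρ) : IsDensityOp (classicalState x ⊗ₖ ρ) := by
  refine ⟨PosSemidef.kronecker ?_ hρ.1, ?_⟩
  · rw [classicalState, ← diagonal_single]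
    exact PosSemidef.diagonal (Pi.single_nonneg.mpr zero_le_one)
  · rw [trace_kronecker, classicalState, trace_single_eq_same, hρ.2, one_mul]

theorem trace_classicalState_mul (a b : 𝒳) :
    (classicalState a * classicalState b).trace = if a = b then 1 else 0 := by
  by_cases hab : a = b <;> simp [classicalState, hab]

theorem trace_sub_uniformState_mul_sub_uniformState (a b : 𝒳) :
    ((classicalState a - uniformState 𝒳) * (classicalState b - uniformState 𝒳)).trace
      = (if a = b then 1 else 0) - (Fintype.card 𝒳 : ℂ)⁻¹ := by
  have : Nonempty 𝒳 := ⟨a⟩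
  have hcard : (Fintype.card 𝒳 : ℂ) ≠ 0 := Nat.cast_ne_zero.mpr Fintype.card_ne_zero
  rw [sub_mul, mul_sub, mul_sub, trace_sub, trace_sub, trace_sub, trace_classicalState_mul]
  simp only [uniformState, classicalState, Matrix.smul_mul, Matrix.mul_smul, one_mul, mul_one,
    trace_smul, trace_single_eq_same, trace_one, smul_eq_mul]
  field_simp
  ring

end ClassicalQuantum

section Events

variable {Ω' : Type*} {Q : Ω' → ℝ}

theorem prEvent_le_one (hQ : ∀ ω', 0 ≤ Q ω') (hQ1 : ∑' ω', Q ω' = 1) (E : Set Ω') :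
    prEvent Q E ≤ 1 :=
  hQ1 ▸ Summable.tsum_le_tsum (E.indicator_le_self' fun ω' _ => hQ ω')
    ((summable_of_tsum_eq_one hQ1).indicator E) (summable_of_tsum_eq_one hQ1)

theorem hasSum_mul_ite_sub_mul (hQ1 : ∑' ω', Q ω' = 1) (p : Ω' → Prop) [DecidablePred p]
    (s c : ℝ) :
    HasSum (fun ω' => Q ω' * (((if p ω' then 1 else 0) - s) * c))
      ((prEvent Q {ω' | p ω'} - s) * c) := by
  have hQs := summable_of_tsum_eq_one hQ1
  have hE : HasSum ({ω' | p ω'}.indicator Q) (prEvent Q {ω' | p ω'}) := (hQs.indicator _).hasSum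
  have hmass : HasSum Q 1 := hQ1 ▸ hQs.hasSum
  have hfun : (fun ω' => Q ω' * (((if p ω' then 1 else 0) - s) * c))
      = fun ω' => ({ω' | p ω'}.indicator Q ω' - s * Q ω') * c := by
    funext ω'
    by_cases h : p ω' <;> simp [h] <;> ring
  rw [hfun]
  simpa only [mul_one] using (hE.sub (hmass.mul_left s)).mul_right c

end Events

theorem sum_sum_sub_mul_le_sum_diag {ι : Type*} [Fintype ι] [DecidableEq ι] {p c : ι → ι → ℝ}
    {s : ℝ} (hc : ∀ i j, 0 ≤ c i j) (hs : 0 ≤ s) (hp1 : ∀ i j, p i j ≤ 1)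
    (hp : ∀ i j, i ≠ j → p i j ≤ s) :
    ∑ i, ∑ j, (p i j - s) * c i j ≤ ∑ i, c i i :=
  calc ∑ i, ∑ j, (p i j - s) * c i j ≤ ∑ i, ∑ j, (if i = j then 1 else 0) * c i j := by
        gcongr with i _ j _
        · exact hc i j
        · split_ifs with h
          · linarith [hp1 i j]
          · linarith [hp i j h]
    _ = ∑ i, c i i := by simp

section CqBlocks

variable {Ω 𝒵 d : Type*} [DecidableEq 𝒵] [Fintype d] [DecidableEq d]

/-- The block `P_Z(z) ρ_z` of the cq-state `[{Z} ⊗ ρ] = ∑ z, {z} ⊗ P_Z(z) ρ_z`. -/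
def cqBlock (P : Ω → ℝ) (Z : Ω → 𝒵) (ρ : Ω → Matrix d d ℂ) (z : 𝒵) : Matrix d d ℂ :=
  expState P fun ω => if Z ω = z then ρ ω else 0

variable {P : Ω → ℝ} {Z : Ω → 𝒵} {ρ : Ω → Matrix d d ℂ}

theorem posSemidef_cqBlock (hP : ∀ ω, 0 ≤ P ω) (hρ : ∀ ω, IsDensityOp (ρ ω)) (z : 𝒵) :
    (cqBlock P Z ρ z).PosSemidef := by
  refine PosSemidef.tsum fun ω => ?_
  rw [← Complex.coe_smul]
  refine PosSemidef.smul ?_ (Complex.zero_le_real.mpr (hP ω))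
  dsimp only
  split_ifs
  exacts [(hρ ω).1, .zero]

theorem hasSum_cqBlock (hPs : Summable P) (hP : ∀ ω, 0 ≤ P ω) (hρ : ∀ ω, IsDensityOp (ρ ω))
    (z : 𝒵) : HasSum (fun ω => P ω • if Z ω = z then ρ ω else 0) (cqBlock P Z ρ z) := by
  have hind : (fun ω => P ω • if Z ω = z then ρ ω else 0)
      = {ω | Z ω = z}.indicator fun ω => P ω • ρ ω := by
    funext ω
    by_cases hz : Z ω = z <;> simp [hz]
  rw [cqBlock, expState, hind]
  exact ((summable_smul_of_isDensityOp hPs hP hρ).indicator _).hasSum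

variable [Fintype 𝒵]

theorem expState_eq_sum_cqBlock (Z : Ω → 𝒵) (hPs : Summable P) (hP : ∀ ω, 0 ≤ P ω)
    (hρ : ∀ ω, IsDensityOp (ρ ω)) : expState P ρ = ∑ z, cqBlock P Z ρ z := by
  rw [← (hasSum_sum fun z _ => hasSum_cqBlock hPs hP hρ z).tsum_eq]
  exact tsum_congr fun ω => by simp

theorem expState_classicalState_kronecker_eq_sum {𝒳 : Type*} [Fintype 𝒳] [DecidableEq 𝒳]
    (hPs : Summable P) (hP : ∀ ω, 0 ≤ P ω) (hρ : ∀ ω, IsDensityOp (ρ ω)) (g : 𝒵 → 𝒳) :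
    expState P (fun ω => classicalState (g (Z ω)) ⊗ₖ ρ ω)
      = ∑ z, classicalState (g z) ⊗ₖ cqBlock P Z ρ z := by
  rw [← (hasSum_sum fun z _ =>
    (hasSum_cqBlock hPs hP hρ z).kronecker_left (classicalState (g z))).tsum_eq]
  refine tsum_congr fun ω => ?_
  rw [sum_eq_single (Z ω) (fun z _ hz => by simp [Ne.symm hz]) (by simp), if_pos rfl,
    kronecker_smul]

theorem DNonUnif_eq_sum {𝒳 : Type*} [Fintype 𝒳] [DecidableEq 𝒳] (hPs : Summable P)
    (hP : ∀ ω, 0 ≤ P ω) (hρ : ∀ ω, IsDensityOp (ρ ω)) (g : 𝒵 → 𝒳) :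
    DNonUnif P (fun ω => g (Z ω)) ρ
      = ∑ z, ∑ z', ((if g z = g z' then 1 else 0) - (Fintype.card 𝒳 : ℝ)⁻¹)
          * (cqBlock P Z ρ z * cqBlock P Z ρ z').trace.re := by
  rw [DNonUnif, hsDistSq, expState_classicalState_kronecker_eq_sum hPs hP hρ g,
    expState_eq_sum_cqBlock Z hPs hP hρ, kronecker_finsetSum, ← sum_sub_distrib]
  simp_rw [← sub_kronecker]
  rw [trace_mul_self_sum_kronecker, Complex.re_sum]
  refine sum_congr rfl fun z _ => ?_
  rw [Complex.re_sum]
  refine sum_congr rfl fun z' _ => ?_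
  rw [trace_sub_uniformState_mul_sub_uniformState, ← Complex.re_ofReal_mul]
  split_ifs <;> push_cast <;> rfl

theorem trace_mul_self_expState_classicalState_kronecker (hPs : Summable P)
    (hP : ∀ ω, 0 ≤ P ω) (hρ : ∀ ω, IsDensityOp (ρ ω)) :
    (expState P (fun ω => classicalState (Z ω) ⊗ₖ ρ ω) *
        expState P (fun ω => classicalState (Z ω) ⊗ₖ ρ ω)).trace.re
      = ∑ z, (cqBlock P Z ρ z * cqBlock P Z ρ z).trace.re := by
  have hA := expState_classicalState_kronecker_eq_sum (Z := Z) hPs hP hρ id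
  rw [Function.id_def] at hA
  rw [hA, trace_mul_self_sum_kronecker]
  simp [trace_classicalState_mul, Complex.re_sum]

theorem tsum_mul_DNonUnif_eq_sum {Ω' 𝒮 : Type*} [Fintype 𝒮] [DecidableEq 𝒮] {Q : Ω' → ℝ}
    (hQ1 : ∑' ω', Q ω' = 1) (hPs : Summable P) (hP : ∀ ω, 0 ≤ P ω)
    (hρ : ∀ ω, IsDensityOp (ρ ω)) (F : Ω' → 𝒵 → 𝒮) :
    ∑' ω', Q ω' * DNonUnif P (fun ω => F ω' (Z ω)) ρ
      = ∑ z, ∑ z', (prEvent Q {ω' | F ω' z = F ω' z'} - (Fintype.card 𝒮 : ℝ)⁻¹)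
          * (cqBlock P Z ρ z * cqBlock P Z ρ z').trace.re := by
  simp_rw [DNonUnif_eq_sum hPs hP hρ, mul_sum]
  exact (hasSum_sum fun z _ => hasSum_sum fun z' _ =>
    hasSum_mul_ite_sub_mul hQ1 (fun ω' => F ω' z = F ω' z') _ _).tsum_eq

end CqBlocks

theorem rpow_neg_renyiS2 {n : Type*} [Fintype n] [DecidableEq n] {ρ : Matrix n n ℂ}
    (h : 0 < (ρ * ρ).trace.re) : (2 : ℝ) ^ (-renyiS2 ρ) = (ρ * ρ).trace.re := by
  rw [renyiS2, neg_neg, Real.rpow_logb (by norm_num) (by norm_num) h]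

theorem stmt_9_general {Ω Ω' 𝒵 𝒮 d : Type*}
    [Fintype 𝒵] [DecidableEq 𝒵] [Fintype 𝒮] [DecidableEq 𝒮]
    [Fintype d] [DecidableEq d]
    (P : Ω → ℝ) (hP : ∀ ω, 0 ≤ P ω) (hP1 : ∑' ω, P ω = 1)
    (Q : Ω' → ℝ) (hQ : ∀ ω', 0 ≤ Q ω') (hQ1 : ∑' ω', Q ω' = 1)
    (Z : Ω → 𝒵) (ρ : Ω → Matrix d d ℂ) (hρ : ∀ ω, IsDensityOp (ρ ω))
    (F : Ω' → 𝒵 → 𝒮)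
    (hF : ∀ z z' : 𝒵, z ≠ z' →
      prEvent Q {ω' | F ω' z = F ω' z'} ≤ 1 / (Fintype.card 𝒮 : ℝ)) :
    (∑' ω', Q ω' * DNonUnif P (fun ω => F ω' (Z ω)) ρ)
        ≤ (2 : ℝ) ^ (-(renyiS2 (expState P (fun ω => classicalState (Z ω) ⊗ₖ ρ ω)))) ∧
    (∑' ω', Q ω' * DNonUnif P (fun ω => F ω' (Z ω)) ρ)
        ≤ (expState P (fun ω => classicalState (Z ω) ⊗ₖ ρ ω) *
            expState P (fun ω => classicalState (Z ω) ⊗ₖ ρ ω)).trace.re := by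
  have hPs := summable_of_tsum_eq_one hP1
  have hA : IsDensityOp (expState P fun ω => classicalState (Z ω) ⊗ₖ ρ ω) :=
    IsDensityOp.expState hP hP1 fun ω => (hρ ω).classicalState_kronecker (Z ω)
  have hbound : ∑' ω', Q ω' * DNonUnif P (fun ω => F ω' (Z ω)) ρ
      ≤ (expState P (fun ω => classicalState (Z ω) ⊗ₖ ρ ω) *
          expState P (fun ω => classicalState (Z ω) ⊗ₖ ρ ω)).trace.re := by
    rw [tsum_mul_DNonUnif_eq_sum hQ1 hPs hP hρ F,
      trace_mul_self_expState_classicalState_kronecker hPs hP hρ]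
    refine sum_sum_sub_mul_le_sum_diag (fun z z' => ?_) (by positivity)
      (fun z z' => prEvent_le_one hQ hQ1 _) (fun z z' h => by simpa using hF z z' h)
    exact (Complex.nonneg_iff.mp ((posSemidef_cqBlock hP hρ z).trace_mul_nonneg
      (posSemidef_cqBlock hP hρ z'))).1
  exact ⟨(rpow_neg_renyiS2 hA.trace_mul_self_pos).symm ▸ hbound, hbound⟩

/-- **Lemma 8.** `E_F[D(F(Z)|ρ)] ≤ 2^{-S₂([{Z} ⊗ ρ])} = tr([{Z} ⊗ ρ]²)`. -/
theorem stmt_9 {Ω Ω' 𝒵 𝒮 d : Type*} [Countable Ω] [Countable Ω']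
    [Fintype 𝒵] [DecidableEq 𝒵] [Fintype 𝒮] [DecidableEq 𝒮]
    [Fintype d] [DecidableEq d]
    (P : Ω → ℝ) (hP : ∀ ω, 0 ≤ P ω) (hP1 : ∑' ω, P ω = 1)
    (Q : Ω' → ℝ) (hQ : ∀ ω', 0 ≤ Q ω') (hQ1 : ∑' ω', Q ω' = 1)
    (Z : Ω → 𝒵) (ρ : Ω → Matrix d d ℂ) (hρ : ∀ ω, IsDensityOp (ρ ω))
    (F : Ω' → 𝒵 → 𝒮)
    (hF : ∀ z z' : 𝒵, z ≠ z' →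
      prEvent Q {ω' | F ω' z = F ω' z'} ≤ 1 / (Fintype.card 𝒮 : ℝ)) :
    (∑' ω', Q ω' * DNonUnif P (fun ω => F ω' (Z ω)) ρ)
        ≤ (2 : ℝ) ^ (-(renyiS2 (expState P (fun ω => classicalState (Z ω) ⊗ₖ ρ ω)))) ∧
    (∑' ω', Q ω' * DNonUnif P (fun ω => F ω' (Z ω)) ρ)
        ≤ (expState P (fun ω => classicalState (Z ω) ⊗ₖ ρ ω) *
            expState P (fun ω => classicalState (Z ω) ⊗ₖ ρ ω)).trace.re :=
  stmt_9_general P hP hP1 Q hQ hQ1 Z ρ hρ F hF
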